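/- Progress for the polymorphic type system of λ_eff^ext: If Δ ⊢ M : A, then exactly one of the following holds: (i) M ⟶ M' for some M'; (ii) M is a value; or (iii) M = E[#op(v)] for some evaluation context E, operation op and value v such that op ∉ E. -/
import Mathlib


set_option maxHeartbeats 1000000

namespace SigRes

/-! ## Types of λ_eff^ext -/

/-- Types: type variables, base types, function, universal, product, sum, list. -/
inductive Ty : Type where
  | var  : ℕ → Ty
  | base : ℕ → Ty
  | fn   : Ty → Ty → Ty
  | all  : ℕ → Ty → Ty
  | prod : Ty → Ty → Ty
  | sum  : Ty → Ty → Ty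
  | list : Ty → Ty

/-- Free type variables. -/
def ftv : Ty → Finset ℕ
  | Ty.var a    => {a}
  | Ty.base _   => ∅
  | Ty.fn A B   => ftv A ∪ ftv B
  | Ty.all a A  => ftv A \ {a}
  | Ty.prod A B => ftv A ∪ ftv B
  | Ty.sum A B  => ftv A ∪ ftv B
  | Ty.list A   => ftv A

/-- Simultaneous type substitution by a map (binders shadow). -/
def substMap : (ℕ → Ty) → Ty → Ty
  | σ, Ty.var a    => σ a
  | _, Ty.base i   => Ty.base i
  | σ, Ty.fn A B   => Ty.fn (substMap σ A) (substMap σ B)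
  | σ, Ty.all a A  => Ty.all a (substMap (Function.update σ a (Ty.var a)) A)
  | σ, Ty.prod A B => Ty.prod (substMap σ A) (substMap σ B)
  | σ, Ty.sum A B  => Ty.sum (substMap σ A) (substMap σ B)
  | σ, Ty.list A   => Ty.list (substMap σ A)

/-- `subst1 A b B` is `A[B/b]`. -/
def subst1 (A : Ty) (b : ℕ) (B : Ty) : Ty :=
  substMap (Function.update Ty.var b B) A

def lookupTy : List (ℕ × Ty) → ℕ → Option Ty
  | [], _ => none
  | (a, B) :: rest, b => if a = b then some B else lookupTy rest b

/-- Simultaneous substitution `A[Bs/as]`. -/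
def msubst (A : Ty) (as : List ℕ) (Bs : List Ty) : Ty :=
  substMap (fun b => (lookupTy (as.zip Bs) b).getD (Ty.var b)) A

/-- `∀ a1. … ∀ an. A`. -/
def Ty.alls : List ℕ → Ty → Ty
  | [], A => A
  | a :: as, A => Ty.all a (Ty.alls as A)

/-! ## Polarity of occurrences of a type variable -/

mutual
/-- Every occurrence of `b` in the type is positive. -/
def posOnly (b : ℕ) : Ty → Prop
  | Ty.var _    => True
  | Ty.base _   => True
  | Ty.fn A B   => negOnly b A ∧ posOnly b B
  | Ty.all a A  => a = b ∨ posOnly b A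
  | Ty.prod A B => posOnly b A ∧ posOnly b B
  | Ty.sum A B  => posOnly b A ∧ posOnly b B
  | Ty.list A   => posOnly b A

/-- Every occurrence of `b` in the type is negative. -/
def negOnly (b : ℕ) : Ty → Prop
  | Ty.var a    => a ≠ b
  | Ty.base _   => True
  | Ty.fn A B   => posOnly b A ∧ negOnly b B
  | Ty.all a A  => a = b ∨ negOnly b A
  | Ty.prod A B => negOnly b A ∧ negOnly b B
  | Ty.sum A B  => negOnly b A ∧ negOnly b B
  | Ty.list A   => negOnly b A
end

/-- Every occurrence of `b` in the type is negative or strictly positive. -/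
def negOrSPos (b : ℕ) : Ty → Prop
  | Ty.var _    => True
  | Ty.base _   => True
  | Ty.fn A B   => posOnly b A ∧ negOrSPos b B
  | Ty.all a A  => a = b ∨ negOrSPos b A
  | Ty.prod A B => negOrSPos b A ∧ negOrSPos b B
  | Ty.sum A B  => negOrSPos b A ∧ negOrSPos b B
  | Ty.list A   => negOrSPos b A

/-! ## Typing contexts -/

inductive Binding : Type where
  | tmVar : ℕ → Ty → Binding
  | tyVar : ℕ → Binding

/-- Typing contexts; the most recently added binding is at the head. -/
abbrev Ctx := List Binding

def tmDom : Ctx → Finset ℕ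
  | [] => ∅
  | Binding.tmVar x _ :: Γ => insert x (tmDom Γ)
  | Binding.tyVar _ :: Γ => tmDom Γ

def tyDom : Ctx → Finset ℕ
  | [] => ∅
  | Binding.tmVar _ _ :: Γ => tyDom Γ
  | Binding.tyVar a :: Γ => insert a (tyDom Γ)

def domAll (Γ : Ctx) : Finset ℕ := tmDom Γ ∪ tyDom Γ

/-- Well-formed typing contexts: pairwise-distinct bound (type) variables, and
    all bound types well formed under the preceding bindings. -/
inductive WfCtx : Ctx → Prop where
  | nil : WfCtx []
  | tm {Γ : Ctx} {x : ℕ} {A : Ty} :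
      WfCtx Γ → x ∉ tmDom Γ → ftv A ⊆ tyDom Γ → WfCtx (Binding.tmVar x A :: Γ)
  | ty {Γ : Ctx} {a : ℕ} :
      WfCtx Γ → a ∉ tyDom Γ → WfCtx (Binding.tyVar a :: Γ)

/-- `Γ ⊢ A` : the type `A` is well formed under `Γ`. -/
def WfTy (Γ : Ctx) (A : Ty) : Prop := WfCtx Γ ∧ ftv A ⊆ tyDom Γ

/-- `Γ, a1, …, an` (type-variable extension). -/
def extendTys (Γ : Ctx) (as : List ℕ) : Ctx := (as.map Binding.tyVar).reverse ++ Γ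

/-- A context consisting only of type-variable bindings. -/
def TyVarOnly (Γ : Ctx) : Prop := ∀ b ∈ Γ, ∃ a, b = Binding.tyVar a

/-! ## Type containment -/

inductive TySub : Ctx → Ty → Ty → Prop where
  | refl {Γ A} : WfCtx Γ → ftv A ⊆ tyDom Γ → TySub Γ A A
  | trans {Γ A B C} : TySub Γ A B → TySub Γ B C → TySub Γ A C
  | inst {Γ a A B} : WfCtx Γ → ftv B ⊆ tyDom Γ →
      TySub Γ (Ty.all a A) (subst1 A a B)
  | gen {Γ a A} : a ∉ ftv A → TySub Γ A (Ty.all a A)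
  | poly {Γ a A B} : TySub (Binding.tyVar a :: Γ) A B →
      TySub Γ (Ty.all a A) (Ty.all a B)
  | fn {Γ A1 A2 B1 B2} : TySub Γ B1 A1 → TySub Γ A2 B2 →
      TySub Γ (Ty.fn A1 A2) (Ty.fn B1 B2)
  | prod {Γ A1 A2 B1 B2} : TySub Γ A1 B1 → TySub Γ A2 B2 →
      TySub Γ (Ty.prod A1 A2) (Ty.prod B1 B2)
  | sum {Γ A1 A2 B1 B2} : TySub Γ A1 B1 → TySub Γ A2 B2 →
      TySub Γ (Ty.sum A1 A2) (Ty.sum B1 B2)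
  | list {Γ A B} : TySub Γ A B → TySub Γ (Ty.list A) (Ty.list B)
  | dfun {Γ a A B} : a ∉ ftv A →
      TySub Γ (Ty.all a (Ty.fn A B)) (Ty.fn A (Ty.all a B))
  | dprod {Γ a A B} :
      TySub Γ (Ty.all a (Ty.prod A B)) (Ty.prod (Ty.all a A) (Ty.all a B))
  | dsum {Γ a A B} :
      TySub Γ (Ty.all a (Ty.sum A B)) (Ty.sum (Ty.all a A) (Ty.all a B))
  | dlist {Γ a A} :
      TySub Γ (Ty.all a (Ty.list A)) (Ty.list (Ty.all a A))

/-! ## Operation signatures -/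

/-- `ty(op) = ∀ tvars. dom ↪ cod`, a closed type signature. -/
structure OpSig : Type where
  tvars : List ℕ
  nodup : tvars.Nodup
  dom : Ty
  cod : Ty
  closed_dom : ftv dom ⊆ tvars.toFinset
  closed_cod : ftv cod ⊆ tvars.toFinset

/-- The signature restriction. -/
def OpSig.SR (s : OpSig) : Prop :=
  (∀ a ∈ s.tvars, negOrSPos a s.dom) ∧ (∀ a ∈ s.tvars, posOnly a s.cod)

/-! ## Terms and handlers -/

mutual
inductive Term : Type where
  | var : ℕ → Term
  | const : ℕ → Term
  | lam : ℕ → Term → Term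
  | app : Term → Term → Term
  | op : ℕ → Term → Term
  | handle : Term → Handler → Term
  | pair : Term → Term → Term
  | proj1 : Term → Term
  | proj2 : Term → Term
  | inl : Term → Term
  | inr : Term → Term
  | scase : Term → ℕ → Term → ℕ → Term → Term
  | nil : Term
  | cons : Term → Term
  | lcase : Term → Term → ℕ → Term → Term
  | fix : ℕ → ℕ → Term → Term

inductive Handler : Type where
  | ret : ℕ → Term → Handler
  | opClause : Handler → ℕ → ℕ → ℕ → Term → Handler
end

/-- The return clause of a handler. -/
def Handler.retClause : Handler → ℕ × Term
  | Handler.ret x M => (x, M)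
  | Handler.opClause H _ _ _ _ => H.retClause

/-- The operation clause of a handler for a given operation (if any). -/
def Handler.lookup : Handler → ℕ → Option (ℕ × ℕ × Term)
  | Handler.ret _ _, _ => none
  | Handler.opClause H o' x k M, o => if o' = o then some (x, k, M) else H.lookup o

mutual
/-- Term substitution `M[N/x]` (binders shadow). -/
def Term.subst : Term → ℕ → Term → Term
  | Term.var y, x, N => if y = x then N else Term.var y
  | Term.const c, _, _ => Term.const c
  | Term.lam y M, x, N => if y = x then Term.lam y M else Term.lam y (M.subst x N)
  | Term.app M1 M2, x, N => Term.app (M1.subst x N) (M2.subst x N)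
  | Term.op o M, x, N => Term.op o (M.subst x N)
  | Term.handle M H, x, N => Term.handle (M.subst x N) (H.subst x N)
  | Term.pair M1 M2, x, N => Term.pair (M1.subst x N) (M2.subst x N)
  | Term.proj1 M, x, N => Term.proj1 (M.subst x N)
  | Term.proj2 M, x, N => Term.proj2 (M.subst x N)
  | Term.inl M, x, N => Term.inl (M.subst x N)
  | Term.inr M, x, N => Term.inr (M.subst x N)
  | Term.scase M y M1 z M2, x, N =>
      Term.scase (M.subst x N) y (if y = x then M1 else M1.subst x N)
        z (if z = x then M2 else M2.subst x N)
  | Term.nil, _, _ => Term.nil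
  | Term.cons M, x, N => Term.cons (M.subst x N)
  | Term.lcase M M1 y M2, x, N =>
      Term.lcase (M.subst x N) (M1.subst x N) y (if y = x then M2 else M2.subst x N)
  | Term.fix f y M, x, N =>
      if f = x ∨ y = x then Term.fix f y M else Term.fix f y (M.subst x N)

def Handler.subst : Handler → ℕ → Term → Handler
  | Handler.ret y M, x, N => Handler.ret y (if y = x then M else M.subst x N)
  | Handler.opClause H o y k M, x, N =>
      Handler.opClause (H.subst x N) o y k (if y = x ∨ k = x then M else M.subst x N)
end

/-- Values. -/
inductive IsValue : Term → Prop where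
  | const {c} : IsValue (Term.const c)
  | lam {x M} : IsValue (Term.lam x M)
  | pair {v1 v2} : IsValue v1 → IsValue v2 → IsValue (Term.pair v1 v2)
  | inl {v} : IsValue v → IsValue (Term.inl v)
  | inr {v} : IsValue v → IsValue (Term.inr v)
  | nil : IsValue Term.nil
  | cons {v} : IsValue v → IsValue (Term.cons v)

mutual
/-- Free term variables of a term. -/
def fvTerm : Term → Finset ℕ
  | Term.var x => {x}
  | Term.const _ => ∅
  | Term.lam x M => fvTerm M \ {x}
  | Term.app M1 M2 => fvTerm M1 ∪ fvTerm M2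
  | Term.op _ M => fvTerm M
  | Term.handle M H => fvTerm M ∪ fvHandler H
  | Term.pair M1 M2 => fvTerm M1 ∪ fvTerm M2
  | Term.proj1 M => fvTerm M
  | Term.proj2 M => fvTerm M
  | Term.inl M => fvTerm M
  | Term.inr M => fvTerm M
  | Term.scase M y M1 z M2 => fvTerm M ∪ (fvTerm M1 \ {y}) ∪ (fvTerm M2 \ {z})
  | Term.nil => ∅
  | Term.cons M => fvTerm M
  | Term.lcase M M1 y M2 => fvTerm M ∪ fvTerm M1 ∪ (fvTerm M2 \ {y})
  | Term.fix f y M => fvTerm M \ {f, y}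

def fvHandler : Handler → Finset ℕ
  | Handler.ret x M => fvTerm M \ {x}
  | Handler.opClause H _ x k M => fvHandler H ∪ (fvTerm M \ {x, k})
end

/-! ## Evaluation contexts -/

inductive ECtx : Type where
  | hole : ECtx
  | appL : ECtx → Term → ECtx
  | appR : (v : Term) → IsValue v → ECtx → ECtx
  | op : ℕ → ECtx → ECtx
  | handle : ECtx → Handler → ECtx
  | pairL : ECtx → Term → ECtx
  | pairR : (v : Term) → IsValue v → ECtx → ECtx
  | proj1 : ECtx → ECtx
  | proj2 : ECtx → ECtx
  | inl : ECtx → ECtx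
  | inr : ECtx → ECtx
  | scase : ECtx → ℕ → Term → ℕ → Term → ECtx
  | cons : ECtx → ECtx
  | lcase : ECtx → Term → ℕ → Term → ECtx

/-- `plug E M` is `E[M]`. -/
def plug : ECtx → Term → Term
  | ECtx.hole, M => M
  | ECtx.appL E M2, M => Term.app (plug E M) M2
  | ECtx.appR v _ E, M => Term.app v (plug E M)
  | ECtx.op o E, M => Term.op o (plug E M)
  | ECtx.handle E H, M => Term.handle (plug E M) H
  | ECtx.pairL E M2, M => Term.pair (plug E M) M2
  | ECtx.pairR v _ E, M => Term.pair v (plug E M)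
  | ECtx.proj1 E, M => Term.proj1 (plug E M)
  | ECtx.proj2 E, M => Term.proj2 (plug E M)
  | ECtx.inl E, M => Term.inl (plug E M)
  | ECtx.inr E, M => Term.inr (plug E M)
  | ECtx.scase E y M1 z M2, M => Term.scase (plug E M) y M1 z M2
  | ECtx.cons E, M => Term.cons (plug E M)
  | ECtx.lcase E M1 y M2, M => Term.lcase (plug E M) M1 y M2

/-- `op ∉ E` : the evaluation context is op-free. -/
def opFree (o : ℕ) : ECtx → Prop
  | ECtx.hole => True
  | ECtx.appL E _ => opFree o E
  | ECtx.appR _ _ E => opFree o E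
  | ECtx.op _ E => opFree o E
  | ECtx.handle E H => H.lookup o = none ∧ opFree o E
  | ECtx.pairL E _ => opFree o E
  | ECtx.pairR _ _ E => opFree o E
  | ECtx.proj1 E => opFree o E
  | ECtx.proj2 E => opFree o E
  | ECtx.inl E => opFree o E
  | ECtx.inr E => opFree o E
  | ECtx.scase E _ _ _ _ => opFree o E
  | ECtx.cons E => opFree o E
  | ECtx.lcase E _ _ _ => opFree o E

/-- Free term variables of an evaluation context. -/
def fvECtx : ECtx → Finset ℕ
  | ECtx.hole => ∅
  | ECtx.appL E M => fvECtx E ∪ fvTerm M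
  | ECtx.appR v _ E => fvTerm v ∪ fvECtx E
  | ECtx.op _ E => fvECtx E
  | ECtx.handle E H => fvECtx E ∪ fvHandler H
  | ECtx.pairL E M => fvECtx E ∪ fvTerm M
  | ECtx.pairR v _ E => fvTerm v ∪ fvECtx E
  | ECtx.proj1 E => fvECtx E
  | ECtx.proj2 E => fvECtx E
  | ECtx.inl E => fvECtx E
  | ECtx.inr E => fvECtx E
  | ECtx.scase E y M1 z M2 => fvECtx E ∪ (fvTerm M1 \ {y}) ∪ (fvTerm M2 \ {z})
  | ECtx.cons E => fvECtx E
  | ECtx.lcase E M1 y M2 => fvECtx E ∪ fvTerm M1 ∪ (fvTerm M2 \ {y})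

/-! ## Semantics -/

/-- Reduction `M1 ⤳ M2`, parameterized by the denotation `ζ` of constants. -/
inductive Reduce (zeta : ℕ → ℕ → Option ℕ) : Term → Term → Prop where
  | const {c1 c2 c} : zeta c1 c2 = some c →
      Reduce zeta (Term.app (Term.const c1) (Term.const c2)) (Term.const c)
  | beta {x M v} : IsValue v →
      Reduce zeta (Term.app (Term.lam x M) v) (M.subst x v)
  | ret {v H x M} : IsValue v → H.retClause = (x, M) →
      Reduce zeta (Term.handle v H) (M.subst x v)
  | handle {E o v H x k M y} : IsValue v → opFree o E →
      H.lookup o = some (x, k, M) →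
      y ∉ fvECtx E ∪ fvHandler H →
      Reduce zeta (Term.handle (plug E (Term.op o v)) H)
        ((M.subst x v).subst k (Term.lam y (Term.handle (plug E (Term.var y)) H)))
  | proj1 {v1 v2} : IsValue v1 → IsValue v2 →
      Reduce zeta (Term.proj1 (Term.pair v1 v2)) v1
  | proj2 {v1 v2} : IsValue v1 → IsValue v2 →
      Reduce zeta (Term.proj2 (Term.pair v1 v2)) v2
  | caseL {v y M1 z M2} : IsValue v →
      Reduce zeta (Term.scase (Term.inl v) y M1 z M2) (M1.subst y v)
  | caseR {v y M1 z M2} : IsValue v →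
      Reduce zeta (Term.scase (Term.inr v) y M1 z M2) (M2.subst z v)
  | lnil {M1 y M2} : Reduce zeta (Term.lcase Term.nil M1 y M2) M1
  | lcons {v M1 y M2} : IsValue v →
      Reduce zeta (Term.lcase (Term.cons v) M1 y M2) (M2.subst y v)
  | fix {f x M} :
      Reduce zeta (Term.fix f x M) ((Term.lam x M).subst f (Term.fix f x M))

/-- Evaluation `M1 ⟶ M2`. -/
def Step (zeta : ℕ → ℕ → Option ℕ) (M1 M2 : Term) : Prop :=
  ∃ E M1' M2', M1 = plug E M1' ∧ M2 = plug E M2' ∧ Reduce zeta M1' M2'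

/-- Multi-step evaluation `M1 ⟶* M2`. -/
def Steps (zeta : ℕ → ℕ → Option ℕ) : Term → Term → Prop :=
  Relation.ReflTransGen (Step zeta)

/-! ## Constants -/

/-- First-order types `ι1 → … → ιn → ι(n+1)`. -/
inductive FirstOrder : Ty → Prop where
  | base {i} : FirstOrder (Ty.base i)
  | fn {i A} : FirstOrder A → FirstOrder (Ty.fn (Ty.base i) A)

/-- Standing assumptions on the types of constants and the denotation `ζ`. -/
structure ConstAssum (tyc : ℕ → Ty) (zeta : ℕ → ℕ → Option ℕ) : Prop where
  firstOrder : ∀ c, FirstOrder (tyc c)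
  zeta_defined : ∀ c1 c2, (zeta c1 c2).isSome ↔
      ∃ i A, tyc c1 = Ty.fn (Ty.base i) A ∧ tyc c2 = Ty.base i
  zeta_ty : ∀ c1 c2 c i A, zeta c1 c2 = some c →
      tyc c1 = Ty.fn (Ty.base i) A → tyc c = A

/-! ## The polymorphic type system -/

mutual
inductive Typing (opty : ℕ → OpSig) (tyc : ℕ → Ty) : Ctx → Term → Ty → Prop where
  | var {Γ x A} : WfCtx Γ → Binding.tmVar x A ∈ Γ →
      Typing opty tyc Γ (Term.var x) A
  | const {Γ c} : WfCtx Γ → Typing opty tyc Γ (Term.const c) (tyc c)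
  | abs {Γ x A M B} : Typing opty tyc (Binding.tmVar x A :: Γ) M B →
      Typing opty tyc Γ (Term.lam x M) (Ty.fn A B)
  | app {Γ M1 M2 A B} : Typing opty tyc Γ M1 (Ty.fn A B) →
      Typing opty tyc Γ M2 A → Typing opty tyc Γ (Term.app M1 M2) B
  | gen {Γ a M A} : Typing opty tyc (Binding.tyVar a :: Γ) M A →
      Typing opty tyc Γ M (Ty.all a A)
  | inst {Γ M A B} : Typing opty tyc Γ M A → TySub Γ A B → WfCtx Γ →
      ftv B ⊆ tyDom Γ → Typing opty tyc Γ M B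
  | op {Γ o M Cs} : WfCtx Γ → Cs.length = (opty o).tvars.length →
      (∀ C ∈ Cs, ftv C ⊆ tyDom Γ) →
      Typing opty tyc Γ M (msubst (opty o).dom (opty o).tvars Cs) →
      Typing opty tyc Γ (Term.op o M) (msubst (opty o).cod (opty o).tvars Cs)
  | handle {Γ M H A B} : Typing opty tyc Γ M A → HTyping opty tyc Γ H A B →
      Typing opty tyc Γ (Term.handle M H) B
  | pair {Γ M1 M2 A B} : Typing opty tyc Γ M1 A → Typing opty tyc Γ M2 B →
      Typing opty tyc Γ (Term.pair M1 M2) (Ty.prod A B)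
  | proj1 {Γ M A B} : Typing opty tyc Γ M (Ty.prod A B) →
      Typing opty tyc Γ (Term.proj1 M) A
  | proj2 {Γ M A B} : Typing opty tyc Γ M (Ty.prod A B) →
      Typing opty tyc Γ (Term.proj2 M) B
  | inl {Γ M A B} : Typing opty tyc Γ M A → ftv B ⊆ tyDom Γ →
      Typing opty tyc Γ (Term.inl M) (Ty.sum A B)
  | inr {Γ M A B} : Typing opty tyc Γ M B → ftv A ⊆ tyDom Γ →
      Typing opty tyc Γ (Term.inr M) (Ty.sum A B)
  | scase {Γ M x M1 y M2 A B C} : Typing opty tyc Γ M (Ty.sum A B) →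
      Typing opty tyc (Binding.tmVar x A :: Γ) M1 C →
      Typing opty tyc (Binding.tmVar y B :: Γ) M2 C →
      Typing opty tyc Γ (Term.scase M x M1 y M2) C
  | nil {Γ A} : WfCtx Γ → ftv A ⊆ tyDom Γ →
      Typing opty tyc Γ Term.nil (Ty.list A)
  | cons {Γ M A} : Typing opty tyc Γ M (Ty.prod A (Ty.list A)) →
      Typing opty tyc Γ (Term.cons M) (Ty.list A)
  | lcase {Γ M M1 x M2 A B} : Typing opty tyc Γ M (Ty.list A) →
      Typing opty tyc Γ M1 B →
      Typing opty tyc (Binding.tmVar x (Ty.prod A (Ty.list A)) :: Γ) M2 B →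
      Typing opty tyc Γ (Term.lcase M M1 x M2) B
  | fix {Γ f x M A B} :
      Typing opty tyc (Binding.tmVar x A :: Binding.tmVar f (Ty.fn A B) :: Γ) M B →
      Typing opty tyc Γ (Term.fix f x M) (Ty.fn A B)

inductive HTyping (opty : ℕ → OpSig) (tyc : ℕ → Ty) : Ctx → Handler → Ty → Ty → Prop where
  | ret {Γ x M A B} : Typing opty tyc (Binding.tmVar x A :: Γ) M B →
      HTyping opty tyc Γ (Handler.ret x M) A B
  | op {Γ H o x k M A B} : HTyping opty tyc Γ H A B →
      Typing opty tyc
        (Binding.tmVar k (Ty.fn (opty o).cod B) ::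
          Binding.tmVar x (opty o).dom :: extendTys Γ (opty o).tvars) M B →
      HTyping opty tyc Γ (Handler.opClause H o x k M) A B
end

/-- `unqualify` removes all outermost universal quantifiers. -/
def unqualify : Ty → Ty
  | Ty.all _ A => unqualify A
  | A => A

/-- Substitution in all types bound in a context. -/
def ctxSubst (Γ : Ctx) (a : ℕ) (A : Ty) : Ctx :=
  Γ.map fun b => match b with
    | Binding.tmVar x B => Binding.tmVar x (subst1 B a A)
    | Binding.tyVar c => Binding.tyVar c


/-! ### Auxiliary: head shapes of types -/

inductive Shape : Type where
  | var : Shape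
  | base : ℕ → Shape
  | fn : Shape
  | prod : Shape
  | sum : Shape
  | list : Shape
deriving DecidableEq

def shape : Ty → Shape
  | Ty.var _ => Shape.var
  | Ty.base i => Shape.base i
  | Ty.fn _ _ => Shape.fn
  | Ty.all _ A => shape A
  | Ty.prod _ _ => Shape.prod
  | Ty.sum _ _ => Shape.sum
  | Ty.list _ => Shape.list

lemma shape_substMap : ∀ (A : Ty) (σ : ℕ → Ty), shape A ≠ Shape.var →
    shape (substMap σ A) = shape A := by
  intro A
  induction A with
  | var a => intro σ h; simp [shape] at h
  | base i => intro σ h; simp [substMap, shape]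
  | fn A B ihA ihB => intro σ h; simp [substMap, shape]
  | all a A ih => intro σ h; simp [shape, substMap] at h ⊢; exact ih _ h
  | prod A B ihA ihB => intro σ h; simp [substMap, shape]
  | sum A B ihA ihB => intro σ h; simp [substMap, shape]
  | list A ih => intro σ h; simp [substMap, shape]

lemma shape_tySub {Γ A B} (h : TySub Γ A B) :
    shape B = shape A ∨ shape A = Shape.var := by
  induction h with
  | refl _ _ => exact Or.inl rfl
  | trans h1 h2 ih1 ih2 =>
    rcases ih1 with ih1 | ih1
    · rcases ih2 with ih2 | ih2
      · exact Or.inl (ih2.trans ih1)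
      · exact Or.inr (ih1 ▸ ih2)
    · exact Or.inr ih1
  | @inst Γ a A B _ _ =>
    by_cases h : shape A = Shape.var
    · exact Or.inr (by simpa [shape] using h)
    · exact Or.inl (by simpa [shape, subst1] using shape_substMap A _ h)
  | gen _ => exact Or.inl rfl
  | poly _ ih =>
    rcases ih with ih | ih
    · exact Or.inl (by simpa [shape] using ih)
    · exact Or.inr (by simpa [shape] using ih)
  | fn _ _ _ _ => exact Or.inl rfl
  | prod _ _ _ _ => exact Or.inl rfl
  | sum _ _ _ _ => exact Or.inl rfl
  | list _ _ => exact Or.inl rfl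
  | dfun _ => exact Or.inl rfl
  | dprod => exact Or.inl rfl
  | dsum => exact Or.inl rfl
  | dlist => exact Or.inl rfl

/-! ### The "base-or-bottom" invariant -/

/-- Core of the type (under binder set `S`) is `base i` or a bound variable. -/
def RBaux (i : ℕ) : Finset ℕ → Ty → Prop
  | S, Ty.var b => b ∈ S
  | _, Ty.base j => j = i
  | S, Ty.all b A => RBaux i (insert b S) A
  | _, _ => False

lemma RBaux_shape {i : ℕ} : ∀ (A : Ty) (S : Finset ℕ), RBaux i S A →
    shape A = Shape.base i ∨ shape A = Shape.var := by
  intro A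
  induction A with
  | var a => intro S h; exact Or.inr rfl
  | base j => intro S h; simp [RBaux] at h; subst h; exact Or.inl rfl
  | fn A B ihA ihB => intro S h; simp [RBaux] at h
  | all a A ih => intro S h; exact ih _ (by simpa [RBaux] using h)
  | prod A B ihA ihB => intro S h; simp [RBaux] at h
  | sum A B ihA ihB => intro S h; simp [RBaux] at h
  | list A ih => intro S h; simp [RBaux] at h

lemma RBaux_substMap {i : ℕ} : ∀ (A : Ty) (S : Finset ℕ) (σ : ℕ → Ty),
    (∀ b ∈ S, σ b = Ty.var b) → RBaux i S A → RBaux i S (substMap σ A) := by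
  intro A
  induction A with
  | var a => intro S σ hσ h; simp [RBaux] at h; simp [substMap, hσ a h, RBaux, h]
  | base j => intro S σ hσ h; simpa [substMap, RBaux] using h
  | fn A B ihA ihB => intro S σ hσ h; simp [RBaux] at h
  | all a A ih =>
    intro S σ hσ h
    simp only [substMap, RBaux] at h ⊢
    apply ih _ _ _ h
    intro b hb
    rcases Finset.mem_insert.mp hb with rfl | hb
    · simp [Function.update]
    · rcases eq_or_ne b a with rfl | hne
      · simp [Function.update]
      · simp [Function.update, hne, hσ b hb]
  | prod A B ihA ihB => intro S σ hσ h; simp [RBaux] at h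
  | sum A B ihA ihB => intro S σ hσ h; simp [RBaux] at h
  | list A ih => intro S σ hσ h; simp [RBaux] at h

lemma RBaux_inst {i a : ℕ} : ∀ (A : Ty) (S : Finset ℕ) (σ : ℕ → Ty),
    (∀ b, b ≠ a → σ b = Ty.var b) → RBaux i S (substMap σ A) →
    RBaux i (insert a S) A := by
  intro A
  induction A with
  | var b =>
    intro S σ hσ h
    rcases eq_or_ne b a with rfl | hne
    · simp [RBaux]
    · rw [substMap, hσ b hne] at h
      simp [RBaux] at h ⊢
      exact Or.inr h
  | base j => intro S σ hσ h; simpa [substMap, RBaux] using h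
  | fn A B ihA ihB => intro S σ hσ h; simp [substMap, RBaux] at h
  | all c A ih =>
    intro S σ hσ h
    simp only [substMap, RBaux] at h ⊢
    rw [Finset.insert_comm]
    apply ih _ _ _ h
    intro b hb
    rcases eq_or_ne b c with rfl | hne
    · simp [Function.update]
    · simp [Function.update, hne, hσ b hb]
  | prod A B ihA ihB => intro S σ hσ h; simp [substMap, RBaux] at h
  | sum A B ihA ihB => intro S σ hσ h; simp [substMap, RBaux] at h
  | list A ih => intro S σ hσ h; simp [substMap, RBaux] at h

lemma RBaux_gen {i : ℕ} : ∀ (A : Ty) (a : ℕ) (S : Finset ℕ), a ∉ ftv A →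
    RBaux i (insert a S) A → RBaux i S A := by
  intro A
  induction A with
  | var b =>
    intro a S ha h
    simp [ftv] at ha
    simp [RBaux] at h ⊢
    rcases h with rfl | h
    · exact absurd rfl ha
    · exact h
  | base j => intro a S ha h; simpa [RBaux] using h
  | fn A B ihA ihB => intro a S ha h; simp [RBaux] at h
  | all c A ih =>
    intro a S ha h
    simp only [RBaux] at h ⊢
    rcases eq_or_ne c a with rfl | hne
    · rwa [Finset.insert_idem] at h
    · simp [ftv, Finset.mem_sdiff, hne.symm] at ha
      rw [Finset.insert_comm] at h
      exact ih a _ ha h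
  | prod A B ihA ihB => intro a S ha h; simp [RBaux] at h
  | sum A B ihA ihB => intro a S ha h; simp [RBaux] at h
  | list A ih => intro a S ha h; simp [RBaux] at h

/-- Downward closure of the base-or-bottom invariant along containment. -/
lemma RBaux_tySub {i : ℕ} {Γ Z Y} (h : TySub Γ Z Y) :
    ∀ S, RBaux i S Y → RBaux i S Z := by
  induction h with
  | refl _ _ => exact fun S h => h
  | trans _ _ ih1 ih2 => exact fun S h => ih1 S (ih2 S h)
  | @inst Γ a A B _ _ =>
    intro S h
    simp only [RBaux]
    refine RBaux_inst A S _ (fun b hb => ?_) h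
    simp [Function.update, hb]
  | @gen Γ a A ha => exact fun S h => RBaux_gen A a S ha (by simpa [RBaux] using h)
  | poly _ ih =>
    intro S h
    simp only [RBaux] at h ⊢
    exact ih _ h
  | fn _ _ _ _ => intro S h; simp [RBaux] at h
  | prod _ _ _ _ => intro S h; simp [RBaux] at h
  | sum _ _ _ _ => intro S h; simp [RBaux] at h
  | list _ _ => intro S h; simp [RBaux] at h
  | dfun _ => intro S h; simp [RBaux] at h
  | dprod => intro S h; simp [RBaux] at h
  | dsum => intro S h; simp [RBaux] at h
  | dlist => intro S h; simp [RBaux] at h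

/-- Invariant: fn-shaped with base-or-bottom domain. -/
def FnInv (i : ℕ) : Ty → Prop
  | Ty.fn A _ => RBaux i ∅ A
  | Ty.all _ A => FnInv i A
  | _ => False

lemma FnInv_substMap {i : ℕ} : ∀ (A : Ty) (σ : ℕ → Ty), FnInv i A →
    FnInv i (substMap σ A) := by
  intro A
  induction A with
  | var a => intro σ h; simp [FnInv] at h
  | base j => intro σ h; simp [FnInv] at h
  | fn A B ihA ihB =>
    intro σ h
    simp only [FnInv, substMap] at h ⊢
    exact RBaux_substMap A ∅ σ (by simp) h
  | all a A ih => intro σ h; simp only [FnInv, substMap] at h ⊢; exact ih _ h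
  | prod A B ihA ihB => intro σ h; simp [FnInv] at h
  | sum A B ihA ihB => intro σ h; simp [FnInv] at h
  | list A ih => intro σ h; simp [FnInv] at h

lemma FnInv_tySub {i : ℕ} {Γ C D} (h : TySub Γ C D) (hC : FnInv i C) : FnInv i D := by
  induction h with
  | refl _ _ => exact hC
  | trans _ _ ih1 ih2 => exact ih2 (ih1 hC)
  | inst _ _ => exact FnInv_substMap _ _ (by simpa [FnInv] using hC)
  | gen _ => simpa [FnInv] using hC
  | poly _ ih => simp only [FnInv] at hC ⊢; exact ih hC
  | @fn Γ A1 A2 B1 B2 h1 _ _ _ =>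
    simp only [FnInv] at hC ⊢
    exact RBaux_tySub h1 ∅ hC
  | prod _ _ _ _ => simp [FnInv] at hC
  | sum _ _ _ _ => simp [FnInv] at hC
  | list _ _ => simp [FnInv] at hC
  | dfun _ => simpa [FnInv] using hC
  | dprod => simp [FnInv] at hC
  | dsum => simp [FnInv] at hC
  | dlist => simp [FnInv] at hC

/-! ### First-order types -/

lemma FO_ftv {T : Ty} (h : FirstOrder T) : ftv T = ∅ := by
  induction h with
  | base => rfl
  | fn _ ih => simp [ftv, ih]

lemma FO_shape {T : Ty} (h : FirstOrder T) :
    (∃ i, shape T = Shape.base i) ∨ shape T = Shape.fn := by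
  cases h with
  | base => exact Or.inl ⟨_, rfl⟩
  | fn _ => exact Or.inr rfl

lemma FO_shape_ne_var {T : Ty} (h : FirstOrder T) : shape T ≠ Shape.var := by
  rcases FO_shape h with ⟨i, h'⟩ | h' <;> simp [h']

lemma FO_of_base {T : Ty} {i : ℕ} (h : FirstOrder T) (hs : shape T = Shape.base i) :
    T = Ty.base i := by
  cases h with
  | base => simp [shape] at hs; rw [hs]
  | fn _ => simp [shape] at hs

lemma FO_of_fn {T : Ty} (h : FirstOrder T) (hs : shape T = Shape.fn) :
    ∃ i A, T = Ty.fn (Ty.base i) A := by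
  cases h with
  | base => simp [shape] at hs
  | fn _ => exact ⟨_, _, rfl⟩

/-! ### Inversion lemmas for typing -/

section Inversion

variable {opty : ℕ → OpSig} {tyc : ℕ → Ty}

lemma const_inv (hfo : ∀ c, FirstOrder (tyc c)) {Γ M A}
    (ht : Typing opty tyc Γ M A) :
    ∀ c, M = Term.const c → TySub Γ (tyc c) A := by
  refine Typing.rec (opty := opty) (tyc := tyc)
    (motive_1 := fun Γ M A _ => ∀ c, M = Term.const c → TySub Γ (tyc c) A)
    (motive_2 := fun _ _ _ _ _ => True)
    ?_ ?c ?_ ?_ ?g ?i ?_ ?_ ?_ ?_ ?_ ?_ ?_ ?_ ?_ ?_ ?_ ?_ ?_ ?_ ht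
  case c =>
    intro Γ c hw c' h
    cases h
    exact TySub.refl hw (by rw [FO_ftv (hfo c)]; simp)
  case g =>
    intro Γ a M A _ ih c h
    subst h
    exact TySub.trans (TySub.gen (by rw [FO_ftv (hfo c)]; simp))
      (TySub.poly (ih c rfl))
  case i =>
    intro Γ M A B _ hsub _ _ ih c h
    exact TySub.trans (ih c h) hsub
  all_goals repeat intro
  all_goals try exact trivial
  all_goals (rename_i h; cases h)

/-- Shape of the type of a value, according to its head constructor. -/
lemma value_shape (hfo : ∀ c, FirstOrder (tyc c)) {Γ M A}
    (ht : Typing opty tyc Γ M A) :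
    (∀ c, M = Term.const c → shape A = shape (tyc c)) ∧
    (∀ x N, M = Term.lam x N → shape A = Shape.fn) ∧
    (∀ N1 N2, M = Term.pair N1 N2 → shape A = Shape.prod) ∧
    (∀ N, M = Term.inl N → shape A = Shape.sum) ∧
    (∀ N, M = Term.inr N → shape A = Shape.sum) ∧
    (M = Term.nil → shape A = Shape.list) ∧
    (∀ N, M = Term.cons N → shape A = Shape.list) := by
  refine Typing.rec (opty := opty) (tyc := tyc)
    (motive_1 := fun Γ M A _ =>
      (∀ c, M = Term.const c → shape A = shape (tyc c)) ∧
      (∀ x N, M = Term.lam x N → shape A = Shape.fn) ∧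
      (∀ N1 N2, M = Term.pair N1 N2 → shape A = Shape.prod) ∧
      (∀ N, M = Term.inl N → shape A = Shape.sum) ∧
      (∀ N, M = Term.inr N → shape A = Shape.sum) ∧
      (M = Term.nil → shape A = Shape.list) ∧
      (∀ N, M = Term.cons N → shape A = Shape.list))
    (motive_2 := fun _ _ _ _ _ => True)
    ?_ ?_ ?_ ?_ ?g ?i ?_ ?_ ?_ ?_ ?_ ?_ ?_ ?_ ?_ ?_ ?_ ?_ ?_ ?_ ht
  case g =>
    intro Γ a M A _ ih
    refine ⟨?_, ?_, ?_, ?_, ?_, ?_, ?_⟩ <;> intros <;> simp only [shape]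
    · exact ih.1 _ ‹_›
    · exact ih.2.1 _ _ ‹_›
    · exact ih.2.2.1 _ _ ‹_›
    · exact ih.2.2.2.1 _ ‹_›
    · exact ih.2.2.2.2.1 _ ‹_›
    · exact ih.2.2.2.2.2.1 ‹_›
    · exact ih.2.2.2.2.2.2 _ ‹_›
  case i =>
    intro Γ M A B _ hsub _ _ ih
    have key : ∀ s, shape A = s → s ≠ Shape.var → shape B = s := by
      intro s hA hs
      rcases shape_tySub hsub with h | h
      · rw [h, hA]
      · exact absurd (hA ▸ h) hs
    refine ⟨?_, ?_, ?_, ?_, ?_, ?_, ?_⟩ <;> intros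
    · exact key _ (ih.1 _ ‹_›) (FO_shape_ne_var (hfo _))
    · exact key _ (ih.2.1 _ _ ‹_›) (by simp)
    · exact key _ (ih.2.2.1 _ _ ‹_›) (by simp)
    · exact key _ (ih.2.2.2.1 _ ‹_›) (by simp)
    · exact key _ (ih.2.2.2.2.1 _ ‹_›) (by simp)
    · exact key _ (ih.2.2.2.2.2.1 ‹_›) (by simp)
    · exact key _ (ih.2.2.2.2.2.2 _ ‹_›) (by simp)
  all_goals intros
  all_goals try trivial
  all_goals refine ⟨?_, ?_, ?_, ?_, ?_, ?_, ?_⟩ <;> intros <;>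
    first
      | contradiction
      | (rename_i h; cases h; simp [shape])

end Inversion

/-! ### Evaluation contexts: composition -/

def comp : ECtx → ECtx → ECtx
  | ECtx.hole, E2 => E2
  | ECtx.appL E M, E2 => ECtx.appL (comp E E2) M
  | ECtx.appR v hv E, E2 => ECtx.appR v hv (comp E E2)
  | ECtx.op o E, E2 => ECtx.op o (comp E E2)
  | ECtx.handle E H, E2 => ECtx.handle (comp E E2) H
  | ECtx.pairL E M, E2 => ECtx.pairL (comp E E2) M
  | ECtx.pairR v hv E, E2 => ECtx.pairR v hv (comp E E2)
  | ECtx.proj1 E, E2 => ECtx.proj1 (comp E E2)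
  | ECtx.proj2 E, E2 => ECtx.proj2 (comp E E2)
  | ECtx.inl E, E2 => ECtx.inl (comp E E2)
  | ECtx.inr E, E2 => ECtx.inr (comp E E2)
  | ECtx.scase E y M1 z M2, E2 => ECtx.scase (comp E E2) y M1 z M2
  | ECtx.cons E, E2 => ECtx.cons (comp E E2)
  | ECtx.lcase E M1 y M2, E2 => ECtx.lcase (comp E E2) M1 y M2

lemma plug_comp : ∀ (E1 E2 : ECtx) (M : Term),
    plug (comp E1 E2) M = plug E1 (plug E2 M) := by
  intro E1
  induction E1 <;> intro E2 M <;> simp [comp, plug, *]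

lemma opFree_comp {o : ℕ} : ∀ (E1 E2 : ECtx), opFree o E1 → opFree o E2 →
    opFree o (comp E1 E2) := by
  intro E1
  induction E1 with
  | hole => exact fun E2 _ h2 => h2
  | handle E H ih => exact fun E2 h1 h2 => ⟨h1.1, ih E2 h1.2 h2⟩
  | appL E M ih => exact fun E2 h1 h2 => ih E2 h1 h2
  | appR v hv E ih => exact fun E2 h1 h2 => ih E2 h1 h2
  | op o' E ih => exact fun E2 h1 h2 => ih E2 h1 h2
  | pairL E M ih => exact fun E2 h1 h2 => ih E2 h1 h2
  | pairR v hv E ih => exact fun E2 h1 h2 => ih E2 h1 h2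
  | proj1 E ih => exact fun E2 h1 h2 => ih E2 h1 h2
  | proj2 E ih => exact fun E2 h1 h2 => ih E2 h1 h2
  | inl E ih => exact fun E2 h1 h2 => ih E2 h1 h2
  | inr E ih => exact fun E2 h1 h2 => ih E2 h1 h2
  | scase E y M1 z M2 ih => exact fun E2 h1 h2 => ih E2 h1 h2
  | cons E ih => exact fun E2 h1 h2 => ih E2 h1 h2
  | lcase E M1 y M2 ih => exact fun E2 h1 h2 => ih E2 h1 h2

lemma step_plug {z : ℕ → ℕ → Option ℕ} {M M' : Term} (E1 : ECtx)
    (h : Step z M M') : Step z (plug E1 M) (plug E1 M') := by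
  obtain ⟨E, a, b, rfl, rfl, hr⟩ := h
  exact ⟨comp E1 E, a, b, (plug_comp E1 E a).symm, (plug_comp E1 E b).symm, hr⟩

/-! ### Values and plugging -/

lemma value_plug : ∀ (E : ECtx) {M : Term}, IsValue (plug E M) → IsValue M := by
  intro E
  induction E with
  | hole => exact fun h => h
  | appL E M2 ih => intro M h; simp only [plug] at h; cases h
  | appR v hv E ih => intro M h; simp only [plug] at h; cases h
  | op o E ih => intro M h; simp only [plug] at h; cases h
  | handle E H ih => intro M h; simp only [plug] at h; cases h
  | pairL E M2 ih =>
    intro M h; simp only [plug] at h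
    cases h with | pair h1 h2 => exact ih h1
  | pairR v hv E ih =>
    intro M h; simp only [plug] at h
    cases h with | pair h1 h2 => exact ih h2
  | proj1 E ih => intro M h; simp only [plug] at h; cases h
  | proj2 E ih => intro M h; simp only [plug] at h; cases h
  | inl E ih =>
    intro M h; simp only [plug] at h
    cases h with | inl h1 => exact ih h1
  | inr E ih =>
    intro M h; simp only [plug] at h
    cases h with | inr h1 => exact ih h1
  | scase E y M1 z M2 ih => intro M h; simp only [plug] at h; cases h
  | cons E ih =>
    intro M h; simp only [plug] at h
    cases h with | cons h1 => exact ih h1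
  | lcase E M1 y M2 ih => intro M h; simp only [plug] at h; cases h

lemma red_not_value {z : ℕ → ℕ → Option ℕ} {R R' : Term}
    (h : Reduce z R R') (hv : IsValue R) : False := by
  cases h <;> cases hv

lemma op_not_value {E : ECtx} {o : ℕ} {v : Term}
    (h : IsValue (plug E (Term.op o v))) : False := by
  have := value_plug E h; cases this

/-! ### The active free operation of a term -/

def isVal : Term → Bool
  | Term.const _ => true
  | Term.lam _ _ => true
  | Term.pair M1 M2 => isVal M1 && isVal M2
  | Term.inl M => isVal M
  | Term.inr M => isVal M
  | Term.nil => true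
  | Term.cons M => isVal M
  | _ => false

lemma isVal_of_value {M : Term} (h : IsValue M) : isVal M = true := by
  induction h <;> simp [isVal, *]

/-- The operation at the active position, if it is unhandled. -/
def freeOp : Term → Option ℕ
  | Term.op o M => if isVal M then some o else freeOp M
  | Term.app M1 M2 => if isVal M1 then freeOp M2 else freeOp M1
  | Term.handle M H =>
      match freeOp M with
      | some o =>
          match H.lookup o with
          | none => some o
          | some _ => none
      | none => none
  | Term.pair M1 M2 => if isVal M1 then freeOp M2 else freeOp M1
  | Term.proj1 M => freeOp M
  | Term.proj2 M => freeOp M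
  | Term.inl M => freeOp M
  | Term.inr M => freeOp M
  | Term.scase M _ _ _ _ => freeOp M
  | Term.cons M => freeOp M
  | Term.lcase M _ _ _ => freeOp M
  | _ => none

lemma freeOp_value {M : Term} (h : IsValue M) : freeOp M = none := by
  induction h with
  | const => rfl
  | lam => rfl
  | nil => rfl
  | pair h1 h2 ih1 ih2 => simp [freeOp, isVal_of_value h1, ih2]
  | inl h ih => simpa [freeOp] using ih
  | inr h ih => simpa [freeOp] using ih
  | cons h ih => simpa [freeOp] using ih

lemma isVal_plug {X : Term} (hX : isVal X = false) :
    ∀ E : ECtx, isVal (plug E X) = false := by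
  intro E
  induction E with
  | hole => exact hX
  | appL E M2 ih => rfl
  | appR v hv E ih => rfl
  | op o E ih => rfl
  | handle E H ih => rfl
  | pairL E M2 ih => simp [plug, isVal, ih]
  | pairR v hv E ih => simp [plug, isVal, ih]
  | proj1 E ih => rfl
  | proj2 E ih => rfl
  | inl E ih => simp [plug, isVal, ih]
  | inr E ih => simp [plug, isVal, ih]
  | scase E y M1 z M2 ih => rfl
  | cons E ih => simp [plug, isVal, ih]
  | lcase E M1 y M2 ih => rfl

lemma isVal_op {o : ℕ} {v : Term} : isVal (Term.op o v) = false := rfl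

lemma freeOp_plug_op {o : ℕ} {v : Term} (hv : IsValue v) :
    ∀ E : ECtx, opFree o E → freeOp (plug E (Term.op o v)) = some o := by
  intro E
  induction E with
  | hole => intro _; simp [plug, freeOp, isVal_of_value hv]
  | appL E M2 ih =>
    intro hf; simp [plug, freeOp, isVal_plug isVal_op, ih hf]
  | appR v1 hv1 E ih =>
    intro hf; simp [plug, freeOp, isVal_of_value hv1, ih hf]
  | op o2 E ih =>
    intro hf; simp [plug, freeOp, isVal_plug isVal_op, ih hf]
  | handle E H ih =>
    intro hf
    simp only [plug, freeOp, ih hf.2, hf.1]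
  | pairL E M2 ih =>
    intro hf; simp [plug, freeOp, isVal_plug isVal_op, ih hf]
  | pairR v1 hv1 E ih =>
    intro hf; simp [plug, freeOp, isVal_of_value hv1, ih hf]
  | proj1 E ih => intro hf; simp [plug, freeOp, ih hf]
  | proj2 E ih => intro hf; simp [plug, freeOp, ih hf]
  | inl E ih => intro hf; simp [plug, freeOp, ih hf]
  | inr E ih => intro hf; simp [plug, freeOp, ih hf]
  | scase E y M1 z M2 ih => intro hf; simp [plug, freeOp, ih hf]
  | cons E ih => intro hf; simp [plug, freeOp, ih hf]
  | lcase E M1 y M2 ih => intro hf; simp [plug, freeOp, ih hf]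

lemma freeOp_plug_none {X : Term} (hX : isVal X = false) (hf : freeOp X = none) :
    ∀ E : ECtx, freeOp (plug E X) = none := by
  intro E
  induction E with
  | hole => exact hf
  | appL E M2 ih => simp [plug, freeOp, isVal_plug hX, ih]
  | appR v1 hv1 E ih => simp [plug, freeOp, isVal_of_value hv1, ih]
  | op o2 E ih => simp [plug, freeOp, isVal_plug hX, ih]
  | handle E H ih => simp only [plug, freeOp, ih]
  | pairL E M2 ih => simp [plug, freeOp, isVal_plug hX, ih]
  | pairR v1 hv1 E ih => simp [plug, freeOp, isVal_of_value hv1, ih]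
  | proj1 E ih => simp [plug, freeOp, ih]
  | proj2 E ih => simp [plug, freeOp, ih]
  | inl E ih => simp [plug, freeOp, ih]
  | inr E ih => simp [plug, freeOp, ih]
  | scase E y M1 z M2 ih => simp [plug, freeOp, ih]
  | cons E ih => simp [plug, freeOp, ih]
  | lcase E M1 y M2 ih => simp [plug, freeOp, ih]

lemma red_isVal {z : ℕ → ℕ → Option ℕ} {R R' : Term} (h : Reduce z R R') :
    isVal R = false := by
  cases h <;> rfl

lemma red_freeOp {z : ℕ → ℕ → Option ℕ} {R R' : Term} (h : Reduce z R R') :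
    freeOp R = none := by
  cases h with
  | const h => rfl
  | beta hv => simp [freeOp, isVal, freeOp_value hv]
  | ret hv _ => simp [freeOp, freeOp_value hv]
  | @handle E o v H x k M y hv hf hl _ =>
    simp [freeOp, freeOp_plug_op hv E hf, hl]
  | proj1 h1 h2 => simp [freeOp, isVal_of_value h1, freeOp_value h1, freeOp_value h2]
  | proj2 h1 h2 => simp [freeOp, isVal_of_value h1, freeOp_value h1, freeOp_value h2]
  | caseL hv => simp [freeOp, freeOp_value hv]
  | caseR hv => simp [freeOp, freeOp_value hv]
  | lnil => rfl
  | lcons hv => simp [freeOp, freeOp_value hv]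
  | fix => rfl

/-- A term of the form `E[#op(v)]` with `op ∉ E` cannot step. -/
lemma stuck {z : ℕ → ℕ → Option ℕ} {o : ℕ} {v : Term} {E : ECtx} {M' : Term}
    (hv : IsValue v) (hf : opFree o E)
    (hs : Step z (plug E (Term.op o v)) M') : False := by
  obtain ⟨E', R, R', heq, _, hr⟩ := hs
  have h1 : freeOp (plug E (Term.op o v)) = some o := freeOp_plug_op hv E hf
  have h2 : freeOp (plug E' R) = none :=
    freeOp_plug_none (red_isVal hr) (red_freeOp hr) E'
  rw [heq, h2] at h1
  cases h1

section Progress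

variable {opty : ℕ → OpSig} {tyc : ℕ → Ty}

lemma base_value (hfo : ∀ c, FirstOrder (tyc c)) {Γ v A} {i : ℕ}
    (ht : Typing opty tyc Γ v A) (hv : IsValue v) (h : RBaux i ∅ A) :
    ∃ c, v = Term.const c ∧ tyc c = Ty.base i := by
  have hs := RBaux_shape A ∅ h
  have vs := value_shape hfo ht
  cases hv with
  | @const c =>
    have h1 := vs.1 c rfl
    have h2 : shape (tyc c) = Shape.base i := by
      rcases hs with hs | hs
      · rw [← h1, hs]
      · rw [h1] at hs; exact absurd hs (FO_shape_ne_var (hfo c))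
    exact ⟨c, rfl, FO_of_base (hfo c) h2⟩
  | lam => exact absurd (vs.2.1 _ _ rfl) (by rcases hs with hs | hs <;> simp [hs])
  | pair h1 h2 =>
    exact absurd (vs.2.2.1 _ _ rfl) (by rcases hs with hs | hs <;> simp [hs])
  | inl h1 => exact absurd (vs.2.2.2.1 _ rfl) (by rcases hs with hs | hs <;> simp [hs])
  | inr h1 => exact absurd (vs.2.2.2.2.1 _ rfl) (by rcases hs with hs | hs <;> simp [hs])
  | nil => exact absurd (vs.2.2.2.2.2.1 rfl) (by rcases hs with hs | hs <;> simp [hs])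
  | cons h1 =>
    exact absurd (vs.2.2.2.2.2.2 _ rfl) (by rcases hs with hs | hs <;> simp [hs])

lemma lift_nonval {z : ℕ → ℕ → Option ℕ} (E1 : ECtx) (hE1 : ∀ o', opFree o' E1)
    {M N : Term} (hN : N = plug E1 M)
    (h : (∃ M', Step z M M') ∨
      (∃ E o v, IsValue v ∧ opFree o E ∧ M = plug E (Term.op o v))) :
    (∃ M', Step z N M') ∨ IsValue N ∨
      (∃ E o v, IsValue v ∧ opFree o E ∧ N = plug E (Term.op o v)) := by
  subst hN
  rcases h with ⟨M', h⟩ | ⟨E, o, v, hv, hf, rfl⟩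
  · exact Or.inl ⟨_, step_plug E1 h⟩
  · exact Or.inr (Or.inr ⟨comp E1 E, o, v, hv,
      opFree_comp E1 E (hE1 o) hf, (plug_comp E1 E _).symm⟩)

lemma progress_tri {zeta : ℕ → ℕ → Option ℕ} (hconst : ConstAssum tyc zeta)
    {Γ : Ctx} {M : Term} {A : Ty} (ht : Typing opty tyc Γ M A)
    (hΓ : TyVarOnly Γ) :
    (∃ M', Step zeta M M') ∨ IsValue M ∨
      (∃ E o v, IsValue v ∧ opFree o E ∧ M = plug E (Term.op o v)) := by
  have hfo := hconst.firstOrder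
  refine Typing.rec (opty := opty) (tyc := tyc)
    (motive_1 := fun Γ M A _ => TyVarOnly Γ →
      (∃ M', Step zeta M M') ∨ IsValue M ∨
        (∃ E o v, IsValue v ∧ opFree o E ∧ M = plug E (Term.op o v)))
    (motive_2 := fun _ _ _ _ _ => True)
    ?var ?const ?abs ?app ?gen ?inst ?op ?handle ?pair ?proj1 ?proj2 ?inl ?inr
    ?scase ?nil ?cons ?lcase ?fix ?hret ?hop ht hΓ
  case var =>
    intro Γ x A _ hmem hΔ
    obtain ⟨a, ha⟩ := hΔ _ hmem
    exact absurd ha (by simp)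
  case const => intro Γ c _ _; exact Or.inr (Or.inl IsValue.const)
  case abs => intro Γ x A M B _ _ _; exact Or.inr (Or.inl IsValue.lam)
  case app =>
    intro Γ M1 M2 A B ht1 ht2 ih1 ih2 hΔ
    rcases ih1 hΔ with h | hval1 | h
    · exact lift_nonval (ECtx.appL ECtx.hole M2) (fun _ => by simp [opFree]) rfl
        (Or.inl h)
    · rcases ih2 hΔ with h | hval2 | h
      · exact lift_nonval (ECtx.appR M1 hval1 ECtx.hole) (fun _ => by simp [opFree])
          rfl (Or.inl h)
      · -- both values; canonical forms for the function part
        have vs := value_shape hfo ht1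
        cases hval1 with
        | lam => exact Or.inl ⟨_, ECtx.hole, _, _, rfl, rfl, Reduce.beta hval2⟩
        | @const c1 =>
          have hsub := const_inv hfo ht1 c1 rfl
          have hsh : shape (tyc c1) = Shape.fn := by
            rcases shape_tySub hsub with h | h
            · simp only [shape] at h; exact h.symm
            · exact absurd h (FO_shape_ne_var (hfo c1))
          obtain ⟨i, A', hty⟩ := FO_of_fn (hfo c1) hsh
          have hFn : FnInv i (Ty.fn A B) :=
            FnInv_tySub hsub (by rw [hty]; simp [FnInv, RBaux])
          obtain ⟨c2, rfl, hc2⟩ :=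
            base_value hfo ht2 hval2 (by simpa [FnInv] using hFn)
          have hz : (zeta c1 c2).isSome :=
            (hconst.zeta_defined c1 c2).2 ⟨i, A', hty, hc2⟩
          obtain ⟨c, hc⟩ := Option.isSome_iff_exists.mp hz
          exact Or.inl ⟨_, ECtx.hole, _, _, rfl, rfl, Reduce.const hc⟩
        | pair h1 h2 => exact absurd (vs.2.2.1 _ _ rfl) (by simp [shape])
        | inl h1 => exact absurd (vs.2.2.2.1 _ rfl) (by simp [shape])
        | inr h1 => exact absurd (vs.2.2.2.2.1 _ rfl) (by simp [shape])
        | nil => exact absurd (vs.2.2.2.2.2.1 rfl) (by simp [shape])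
        | cons h1 => exact absurd (vs.2.2.2.2.2.2 _ rfl) (by simp [shape])
      · exact lift_nonval (ECtx.appR M1 hval1 ECtx.hole) (fun _ => by simp [opFree])
          rfl (Or.inr h)
    · exact lift_nonval (ECtx.appL ECtx.hole M2) (fun _ => by simp [opFree]) rfl
        (Or.inr h)
  case gen =>
    intro Γ a M A _ ih hΔ
    refine ih (fun b hb => ?_)
    rcases List.mem_cons.mp hb with rfl | hb
    · exact ⟨a, rfl⟩
    · exact hΔ b hb
  case inst => intro Γ M A B _ _ _ _ ih hΔ; exact ih hΔ
  case op =>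
    intro Γ o M Cs _ _ _ _ ih hΔ
    rcases ih hΔ with h | hval | h
    · exact lift_nonval (ECtx.op o ECtx.hole) (fun _ => by simp [opFree]) rfl
        (Or.inl h)
    · exact Or.inr (Or.inr ⟨ECtx.hole, o, M, hval, trivial, rfl⟩)
    · exact lift_nonval (ECtx.op o ECtx.hole) (fun _ => by simp [opFree]) rfl
        (Or.inr h)
  case handle =>
    intro Γ M H A B _ _ ihM _ hΔ
    rcases ihM hΔ with ⟨M', h⟩ | hval | ⟨E, o, v, hv, hf, rfl⟩
    · exact Or.inl ⟨_, step_plug (ECtx.handle ECtx.hole H) h⟩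
    · exact Or.inl ⟨_, ECtx.hole, _, _, rfl, rfl, Reduce.ret hval rfl⟩
    · cases hl : H.lookup o with
      | some p =>
        obtain ⟨x, k, N⟩ := p
        obtain ⟨y, hy⟩ := Infinite.exists_notMem_finset (fvECtx E ∪ fvHandler H)
        exact Or.inl ⟨_, ECtx.hole, _, _, rfl, rfl, Reduce.handle hv hf hl hy⟩
      | none => exact Or.inr (Or.inr ⟨ECtx.handle E H, o, v, hv, ⟨hl, hf⟩, rfl⟩)
  case pair =>
    intro Γ M1 M2 A B _ _ ih1 ih2 hΔ
    rcases ih1 hΔ with h | hval1 | h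
    · exact lift_nonval (ECtx.pairL ECtx.hole M2) (fun _ => by simp [opFree]) rfl
        (Or.inl h)
    · rcases ih2 hΔ with h | hval2 | h
      · exact lift_nonval (ECtx.pairR M1 hval1 ECtx.hole)
          (fun _ => by simp [opFree]) rfl (Or.inl h)
      · exact Or.inr (Or.inl (IsValue.pair hval1 hval2))
      · exact lift_nonval (ECtx.pairR M1 hval1 ECtx.hole)
          (fun _ => by simp [opFree]) rfl (Or.inr h)
    · exact lift_nonval (ECtx.pairL ECtx.hole M2) (fun _ => by simp [opFree]) rfl
        (Or.inr h)
  case proj1 =>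
    intro Γ M A B ht0 ih hΔ
    rcases ih hΔ with h | hval | h
    · exact lift_nonval (ECtx.proj1 ECtx.hole) (fun _ => by simp [opFree]) rfl
        (Or.inl h)
    · have vs := value_shape hfo ht0
      cases hval with
      | pair h1 h2 => exact Or.inl ⟨_, ECtx.hole, _, _, rfl, rfl, Reduce.proj1 h1 h2⟩
      | @const c =>
        exact absurd (vs.1 c rfl)
          (by rcases FO_shape (hfo c) with ⟨i, h'⟩ | h' <;> simp [shape, h'])
      | lam => exact absurd (vs.2.1 _ _ rfl) (by simp [shape])
      | inl h1 => exact absurd (vs.2.2.2.1 _ rfl) (by simp [shape])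
      | inr h1 => exact absurd (vs.2.2.2.2.1 _ rfl) (by simp [shape])
      | nil => exact absurd (vs.2.2.2.2.2.1 rfl) (by simp [shape])
      | cons h1 => exact absurd (vs.2.2.2.2.2.2 _ rfl) (by simp [shape])
    · exact lift_nonval (ECtx.proj1 ECtx.hole) (fun _ => by simp [opFree]) rfl
        (Or.inr h)
  case proj2 =>
    intro Γ M A B ht0 ih hΔ
    rcases ih hΔ with h | hval | h
    · exact lift_nonval (ECtx.proj2 ECtx.hole) (fun _ => by simp [opFree]) rfl
        (Or.inl h)
    · have vs := value_shape hfo ht0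
      cases hval with
      | pair h1 h2 => exact Or.inl ⟨_, ECtx.hole, _, _, rfl, rfl, Reduce.proj2 h1 h2⟩
      | @const c =>
        exact absurd (vs.1 c rfl)
          (by rcases FO_shape (hfo c) with ⟨i, h'⟩ | h' <;> simp [shape, h'])
      | lam => exact absurd (vs.2.1 _ _ rfl) (by simp [shape])
      | inl h1 => exact absurd (vs.2.2.2.1 _ rfl) (by simp [shape])
      | inr h1 => exact absurd (vs.2.2.2.2.1 _ rfl) (by simp [shape])
      | nil => exact absurd (vs.2.2.2.2.2.1 rfl) (by simp [shape])
      | cons h1 => exact absurd (vs.2.2.2.2.2.2 _ rfl) (by simp [shape])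
    · exact lift_nonval (ECtx.proj2 ECtx.hole) (fun _ => by simp [opFree]) rfl
        (Or.inr h)
  case inl =>
    intro Γ M A B _ _ ih hΔ
    rcases ih hΔ with h | hval | h
    · exact lift_nonval (ECtx.inl ECtx.hole) (fun _ => by simp [opFree]) rfl
        (Or.inl h)
    · exact Or.inr (Or.inl (IsValue.inl hval))
    · exact lift_nonval (ECtx.inl ECtx.hole) (fun _ => by simp [opFree]) rfl
        (Or.inr h)
  case inr =>
    intro Γ M A B _ _ ih hΔ
    rcases ih hΔ with h | hval | h
    · exact lift_nonval (ECtx.inr ECtx.hole) (fun _ => by simp [opFree]) rfl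
        (Or.inl h)
    · exact Or.inr (Or.inl (IsValue.inr hval))
    · exact lift_nonval (ECtx.inr ECtx.hole) (fun _ => by simp [opFree]) rfl
        (Or.inr h)
  case scase =>
    intro Γ M x M1 y M2 A B C ht0 _ _ ih _ _ hΔ
    rcases ih hΔ with h | hval | h
    · exact lift_nonval (ECtx.scase ECtx.hole x M1 y M2)
        (fun _ => by simp [opFree]) rfl (Or.inl h)
    · have vs := value_shape hfo ht0
      cases hval with
      | inl h1 => exact Or.inl ⟨_, ECtx.hole, _, _, rfl, rfl, Reduce.caseL h1⟩
      | inr h1 => exact Or.inl ⟨_, ECtx.hole, _, _, rfl, rfl, Reduce.caseR h1⟩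
      | @const c =>
        exact absurd (vs.1 c rfl)
          (by rcases FO_shape (hfo c) with ⟨i, h'⟩ | h' <;> simp [shape, h'])
      | lam => exact absurd (vs.2.1 _ _ rfl) (by simp [shape])
      | pair h1 h2 => exact absurd (vs.2.2.1 _ _ rfl) (by simp [shape])
      | nil => exact absurd (vs.2.2.2.2.2.1 rfl) (by simp [shape])
      | cons h1 => exact absurd (vs.2.2.2.2.2.2 _ rfl) (by simp [shape])
    · exact lift_nonval (ECtx.scase ECtx.hole x M1 y M2)
        (fun _ => by simp [opFree]) rfl (Or.inr h)
  case nil => intro Γ A _ _ _; exact Or.inr (Or.inl IsValue.nil)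
  case cons =>
    intro Γ M A _ ih hΔ
    rcases ih hΔ with h | hval | h
    · exact lift_nonval (ECtx.cons ECtx.hole) (fun _ => by simp [opFree]) rfl
        (Or.inl h)
    · exact Or.inr (Or.inl (IsValue.cons hval))
    · exact lift_nonval (ECtx.cons ECtx.hole) (fun _ => by simp [opFree]) rfl
        (Or.inr h)
  case lcase =>
    intro Γ M M1 x M2 A B ht0 _ _ ih _ _ hΔ
    rcases ih hΔ with h | hval | h
    · exact lift_nonval (ECtx.lcase ECtx.hole M1 x M2)
        (fun _ => by simp [opFree]) rfl (Or.inl h)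
    · have vs := value_shape hfo ht0
      cases hval with
      | nil => exact Or.inl ⟨_, ECtx.hole, _, _, rfl, rfl, Reduce.lnil⟩
      | cons h1 => exact Or.inl ⟨_, ECtx.hole, _, _, rfl, rfl, Reduce.lcons h1⟩
      | @const c =>
        exact absurd (vs.1 c rfl)
          (by rcases FO_shape (hfo c) with ⟨i, h'⟩ | h' <;> simp [shape, h'])
      | lam => exact absurd (vs.2.1 _ _ rfl) (by simp [shape])
      | pair h1 h2 => exact absurd (vs.2.2.1 _ _ rfl) (by simp [shape])
      | inl h1 => exact absurd (vs.2.2.2.1 _ rfl) (by simp [shape])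
      | inr h1 => exact absurd (vs.2.2.2.2.1 _ rfl) (by simp [shape])
    · exact lift_nonval (ECtx.lcase ECtx.hole M1 x M2)
        (fun _ => by simp [opFree]) rfl (Or.inr h)
  case fix =>
    intro Γ f x M A B _ _ _
    exact Or.inl ⟨_, ECtx.hole, _, _, rfl, rfl, Reduce.fix⟩
  all_goals repeat intro
  all_goals trivial

end Progress

/-- **Progress** for the polymorphic type system of λ_eff^ext: if `Δ ⊢ M : A`,
then exactly one of the following holds: (i) `M ⟶ M'` for some `M'`;
(ii) `M` is a value; (iii) `M = E[#op(v)]` for some `op`-free `E` and value `v`. -/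
theorem progress
    (opty : ℕ → OpSig) (tyc : ℕ → Ty) (zeta : ℕ → ℕ → Option ℕ)
    (hconst : ConstAssum tyc zeta)
    (Δ : Ctx) (hΔ : TyVarOnly Δ)
    (M : Term) (A : Ty)
    (ht : Typing opty tyc Δ M A) :
    ((∃ M', Step zeta M M') ∨ IsValue M ∨
       (∃ E o v, IsValue v ∧ opFree o E ∧ M = plug E (Term.op o v))) ∧
    ¬ ((∃ M', Step zeta M M') ∧ IsValue M) ∧
    ¬ ((∃ M', Step zeta M M') ∧
        (∃ E o v, IsValue v ∧ opFree o E ∧ M = plug E (Term.op o v))) ∧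
    ¬ (IsValue M ∧
        (∃ E o v, IsValue v ∧ opFree o E ∧ M = plug E (Term.op o v))) := by
  refine ⟨progress_tri hconst ht hΔ, ?_, ?_, ?_⟩
  · rintro ⟨⟨M', hs⟩, hv⟩
    obtain ⟨E, a, b, heq, _, hr⟩ := hs
    exact red_not_value hr (value_plug E (heq ▸ hv))
  · rintro ⟨⟨M', hs⟩, E, o, v, hv, hf, rfl⟩
    exact stuck hv hf hs
  · rintro ⟨hvM, E, o, v, hv, hf, rfl⟩
    exact op_not_value hvM

end SigRes
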